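/- arXiv:1203.5713 — 6 statements merged into one kernel-verified Lean document; each statement's English description precedes it below -/
import Mathlib

section
/- Let S be a densely defined, closed, symmetric operator in a complex Hilbert space H with S ≥ εI for some ε > 0, and let S_F and S_K denote its Friedrichs and Krein–von Neumann extensions. Then S_F and S_K are relatively prime, i.e., dom(S_F) ∩ dom(S_K) = dom(S). -/
open scoped ComplexInnerProductSpace
open Filter

noncomputable section

variable {H : Type*} [NormedAddCommGroup H] [InnerProductSpace ℂ H] [CompleteSpace H]

/-- The kernel of the adjoint `S*` of a densely defined operator `S`,
described as `{v | ∀ u ∈ dom S, ⟪S u, v⟫ = 0}`. -/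
def adjKerD (S : H →ₗ.[ℂ] H) : Submodule ℂ H where
  carrier := {v | ∀ u : S.domain, ⟪S u, v⟫ = 0}
  add_mem' := by
    intro a b ha hb u
    rw [inner_add_right, ha u, hb u, add_zero]
  zero_mem' := by
    intro u; exact inner_zero_right _
  smul_mem' := by
    intro c a ha u
    rw [inner_smul_right, ha u, mul_zero]

/-!
Since `dom S ⊆ dom S_F`, the modular law turns `dom S_K = dom S ∔ ker S*` into
`dom S_F ∩ dom S_K = dom S ∔ (dom S_F ∩ ker S*)`. As `S_F ⊆ S*`, a vector of
`dom S_F ∩ ker S*` is annihilated by `S_F`, and `S_F ≥ ε > 0` has trivial kernel.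
-/

theorem LinearPMap.eq_zero_of_apply_eq_zero_of_coercive {𝕜 E : Type*} [RCLike 𝕜]
    [NormedAddCommGroup E] [InnerProductSpace 𝕜 E] {T : E →ₗ.[𝕜] E} {ε : ℝ} (hε : 0 < ε)
    (hT : ∀ v : T.domain, ε * ‖(v : E)‖ ^ 2 ≤ RCLike.re (inner 𝕜 (v : E) (T v)))
    {v : T.domain} (hv : T v = 0) : (v : E) = 0 := by
  have hle := hT v
  rw [hv, inner_zero_right, RCLike.zero_re] at hle
  have : ‖(v : E)‖ ^ 2 = 0 := le_antisymm (nonpos_of_mul_nonpos_right hle hε) (by positivity)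
  simpa using this

section

variable {E : Type*} [NormedAddCommGroup E] [InnerProductSpace ℂ E] {S T : E →ₗ.[ℂ] E}

theorem LinearPMap.apply_eq_zero_of_mem_adjKerD (hdense : Dense (S.domain : Set E))
    (hTadj : ∀ (v : T.domain) (u : S.domain), ⟪S u, (v : E)⟫ = ⟪(u : E), T v⟫)
    {v : T.domain} (hv : (v : E) ∈ adjKerD S) : T v = 0 :=
  hdense.eq_zero_of_inner_right ℂ fun u hu => (hTadj v ⟨u, hu⟩).symm.trans (hv ⟨u, hu⟩)

theorem LinearPMap.domain_inf_adjKerD_eq_bot (hdense : Dense (S.domain : Set E))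
    (hTadj : ∀ (v : T.domain) (u : S.domain), ⟪S u, (v : E)⟫ = ⟪(u : E), T v⟫)
    {ε : ℝ} (hε : 0 < ε) (hT : ∀ v : T.domain, ε * ‖(v : E)‖ ^ 2 ≤ (⟪(v : E), T v⟫).re) :
    T.domain ⊓ adjKerD S = ⊥ := by
  refine (Submodule.eq_bot_iff _).mpr fun w ⟨hwT, hwK⟩ => ?_
  exact LinearPMap.eq_zero_of_apply_eq_zero_of_coercive (v := ⟨w, hwT⟩) hε hT
    (LinearPMap.apply_eq_zero_of_mem_adjKerD hdense hTadj hwK)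

end

theorem stmt_0_general (S S_F S_K : H →ₗ.[ℂ] H)
    (hdense : Dense (S.domain : Set H))
    (ε : ℝ) (hε : 0 < ε)
    (hFext : S ≤ S_F)
    -- `S_F ⊆ S*` and `S_K ⊆ S*` (both are self-adjoint restrictions of the adjoint):
    (hFadj : ∀ (v : S_F.domain) (u : S.domain), ⟪S u, (v : H)⟫ = ⟪(u : H), S_F v⟫)
    -- `S_F ≥ ε·I`:
    (hFbound : ∀ v : S_F.domain, ε * ‖(v : H)‖ ^ 2 ≤ (⟪(v : H), S_F v⟫).re)
    -- Krein's domain formula `dom S_K = dom S ∔ ker S*`: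
    (hdomK : S_K.domain = S.domain ⊔ adjKerD S) :
    S_F.domain ⊓ S_K.domain = S.domain := by
  rw [hdomK, inf_comm, sup_inf_assoc_of_le _ hFext.1, inf_comm,
    LinearPMap.domain_inf_adjKerD_eq_bot hdense hFadj hε hFbound, sup_bot_eq]

/-- Lemma 2.8: If `S` is densely defined, closed, symmetric with
`S ≥ ε·I` for some `ε > 0`, and `S_F`, `S_K` are its Friedrichs and Krein–von Neumann
extensions (nonnegative self-adjoint extensions, restrictions of `S*`, with
`dom S_K = dom S ∔ ker S*` and `S_F ≥ ε·I`), then `S_F` and `S_K` are relatively prime: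
`dom S_F ∩ dom S_K = dom S`. -/
theorem stmt_0 (S S_F S_K : H →ₗ.[ℂ] H)
    (hdense : Dense (S.domain : Set H))
    (hclosed : S.IsClosed)
    (hsym : ∀ u v : S.domain, ⟪S u, (v : H)⟫ = ⟪(u : H), S v⟫)
    (ε : ℝ) (hε : 0 < ε)
    (hbound : ∀ u : S.domain, ε * ‖(u : H)‖ ^ 2 ≤ (⟪(u : H), S u⟫).re)
    (hFext : S ≤ S_F) (hKext : S ≤ S_K)
    -- `S_F ⊆ S*` and `S_K ⊆ S*` (both are self-adjoint restrictions of the adjoint):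
    (hFadj : ∀ (v : S_F.domain) (u : S.domain), ⟪S u, (v : H)⟫ = ⟪(u : H), S_F v⟫)
    (hKadj : ∀ (v : S_K.domain) (u : S.domain), ⟪S u, (v : H)⟫ = ⟪(u : H), S_K v⟫)
    -- `S_F ≥ ε·I`:
    (hFbound : ∀ v : S_F.domain, ε * ‖(v : H)‖ ^ 2 ≤ (⟪(v : H), S_F v⟫).re)
    -- Krein's domain formula `dom S_K = dom S ∔ ker S*`:
    (hdomK : S_K.domain = S.domain ⊔ adjKerD S) :
    S_F.domain ⊓ S_K.domain = S.domain :=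
  stmt_0_general S S_F S_K hdense ε hε hFext hFadj hFbound hdomK
end
end

section
/- Let S be a densely defined, closed, symmetric operator in a Hilbert space H with S ≥ εI for some ε > 0, and S_K its Krein–von Neumann extension. For λ ≠ 0, there exists a nonzero v ∈ dom(S_K) with S_K v = λv if and only if there exists a nonzero u ∈ dom(S*S) with S*S u = λ S u; moreover the solutions correspond via u = (S_F)⁻¹ S_K v and v = λ⁻¹ S u. -/
/-!
Decompose `v ∈ dom S_K` as `v = u + w` with `u ∈ dom S` and `w ∈ ker S*`. Since `S_K ⊆ S*` kills
`ker S*`, we get `S_K v = S u = S_F u`, so `S_K v = λ v` reads `S u = λ v`. Testing `S*` against `dom S`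
and using the symmetry of `S`, the condition `v - u ∈ ker S*` is then exactly `S*S u = λ S u`.
Conversely, a solution `u` gives `v = λ⁻¹ S u`, which lies in `dom S_K` because `v - u ∈ ker S*`,
and `v ≠ 0` because `S ≥ ε` is injective.
-/

open scoped ComplexInnerProductSpace
open Filter

noncomputable section

variable {H : Type*} [NormedAddCommGroup H] [InnerProductSpace ℂ H] [CompleteSpace H]

theorem LinearPMap.apply_ne_zero_of_coercive {𝕜 E : Type*} [RCLike 𝕜] [NormedAddCommGroup E]
    [InnerProductSpace 𝕜 E] {T : E →ₗ.[𝕜] E} {ε : ℝ} (hε : 0 < ε)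
    (hT : ∀ u : T.domain, ε * ‖(u : E)‖ ^ 2 ≤ RCLike.re (inner 𝕜 (u : E) (T u)))
    {u : T.domain} (hu : (u : E) ≠ 0) : T u ≠ 0 := by
  intro h
  have hpos : 0 < ε * ‖(u : E)‖ ^ 2 := by positivity
  have hle := hT u
  rw [h, inner_zero_right, RCLike.zero_re] at hle
  linarith

/-- `u ∈ dom (S*S)` with `S*S u = λ S u`, the adjoint being tested against `dom S`. -/
def IsPencilEigenvector {E : Type*} [NormedAddCommGroup E] [InnerProductSpace ℂ E]
    (S : E →ₗ.[ℂ] E) (lam : ℂ) (u : S.domain) : Prop :=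
  ∀ w : S.domain, ⟪S w, S u⟫ = ⟪(w : E), lam • S u⟫

section KreinVonNeumann

variable {E : Type*} [NormedAddCommGroup E] [InnerProductSpace ℂ E] {S T : E →ₗ.[ℂ] E}

theorem exists_sub_mem_adjKerD (hdom : T.domain = S.domain ⊔ adjKerD S) (v : T.domain) :
    ∃ u : S.domain, (v : E) - u ∈ adjKerD S := by
  have hv : (v : E) ∈ S.domain ⊔ adjKerD S := hdom ▸ v.2
  obtain ⟨u, hu, w, hw, huw⟩ := Submodule.mem_sup.mp hv
  refine ⟨⟨u, hu⟩, ?_⟩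
  rwa [← huw, add_sub_cancel_left]

theorem apply_eq_of_sub_mem_adjKerD (hdense : Dense (S.domain : Set E)) (hext : S ≤ T)
    (hadj : ∀ (v : T.domain) (u : S.domain), ⟪S u, (v : E)⟫ = ⟪(u : E), T v⟫)
    {v : T.domain} {u : S.domain} (h : (v : E) - u ∈ adjKerD S) : T v = S u := by
  let u' : T.domain := ⟨u, hext.1 u.2⟩
  have hTu : S u = T u' := hext.2 rfl
  refine hdense.eq_of_inner_right ℂ fun x hx => ?_
  rw [hTu, ← hadj v ⟨x, hx⟩, ← hadj u' ⟨x, hx⟩, ← sub_eq_zero, ← inner_sub_right]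
  exact h ⟨x, hx⟩

theorem sub_mem_adjKerD_iff (hsym : ∀ u v : S.domain, ⟪S u, (v : E)⟫ = ⟪(u : E), S v⟫)
    {lam : ℂ} (hlam : lam ≠ 0) {u : S.domain} {x : E} (hx : S u = lam • x) :
    x - u ∈ adjKerD S ↔ IsPencilEigenvector S lam u := by
  have key : ∀ w : S.domain, ⟪S w, S u⟫ - ⟪(w : E), lam • S u⟫ = lam * ⟪S w, x - u⟫ := by
    intro w
    rw [inner_sub_right, mul_sub, inner_smul_right, ← hsym, hx, inner_smul_right]
  refine forall_congr' fun w => ?_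
  rw [← sub_eq_zero (a := ⟪S w, S u⟫), key, mul_eq_zero, or_iff_right hlam]

variable (hdense : Dense (S.domain : Set E))
  (hsym : ∀ u v : S.domain, ⟪S u, (v : E)⟫ = ⟪(u : E), S v⟫)
  (hext : S ≤ T) (hadj : ∀ (v : T.domain) (u : S.domain), ⟪S u, (v : E)⟫ = ⟪(u : E), T v⟫)
  (hdom : T.domain = S.domain ⊔ adjKerD S) {lam : ℂ} (hlam : lam ≠ 0)
include hdense hsym hext hadj hdom hlam

theorem exists_isPencilEigenvector_of_apply_eq_smul {v : T.domain} (hv : (v : E) ≠ 0)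
    (heig : T v = lam • (v : E)) :
    ∃ u : S.domain, (u : E) ≠ 0 ∧ IsPencilEigenvector S lam u ∧ T v = S u ∧
      lam • (v : E) = S u := by
  obtain ⟨u, hvu⟩ := exists_sub_mem_adjKerD hdom v
  have hTv := apply_eq_of_sub_mem_adjKerD hdense hext hadj hvu
  have hSu : S u = lam • (v : E) := hTv ▸ heig
  refine ⟨u, fun hu => hv ?_, (sub_mem_adjKerD_iff hsym hlam hSu).1 hvu, hTv, hSu.symm⟩
  rw [show u = 0 from Subtype.ext hu, LinearPMap.map_zero, eq_comm, smul_eq_zero] at hSu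
  exact hSu.resolve_left hlam

theorem exists_apply_eq_smul_of_isPencilEigenvector {u : S.domain} (hu : S u ≠ 0)
    (hpen : IsPencilEigenvector S lam u) :
    ∃ v : T.domain, (v : E) ≠ 0 ∧ T v = lam • (v : E) ∧ lam • (v : E) = S u := by
  have hSu : S u = lam • lam⁻¹ • S u := (smul_inv_smul₀ hlam _).symm
  have hker := (sub_mem_adjKerD_iff hsym hlam hSu).2 hpen
  have hmem : lam⁻¹ • S u ∈ T.domain := by
    rw [hdom, ← add_sub_cancel (u : E) (lam⁻¹ • S u)]
    exact Submodule.add_mem_sup u.2 hker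
  have hTv := apply_eq_of_sub_mem_adjKerD hdense hext hadj (v := ⟨_, hmem⟩) hker
  exact ⟨⟨_, hmem⟩, smul_ne_zero (inv_ne_zero hlam) hu, hTv.trans hSu, hSu.symm⟩

end KreinVonNeumann

theorem stmt_1_general (S S_F S_K : H →ₗ.[ℂ] H)
    (hdense : Dense (S.domain : Set H))
    (hsym : ∀ u v : S.domain, ⟪S u, (v : H)⟫ = ⟪(u : H), S v⟫)
    (ε : ℝ) (hε : 0 < ε)
    (hbound : ∀ u : S.domain, ε * ‖(u : H)‖ ^ 2 ≤ (⟪(u : H), S u⟫).re)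
    (hFext : S ≤ S_F) (hKext : S ≤ S_K)
    (hKadj : ∀ (v : S_K.domain) (u : S.domain), ⟪S u, (v : H)⟫ = ⟪(u : H), S_K v⟫)
    (hdomK : S_K.domain = S.domain ⊔ adjKerD S)
    (lam : ℂ) (hlam : lam ≠ 0) :
    ((∃ v : S_K.domain, (v : H) ≠ 0 ∧ S_K v = lam • (v : H)) ↔
      (∃ u : S.domain, (u : H) ≠ 0 ∧
        ∀ w : S.domain, ⟪S w, S u⟫ = ⟪(w : H), lam • S u⟫)) ∧
    (∀ v : S_K.domain, (v : H) ≠ 0 → S_K v = lam • (v : H) →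
      ∃ u : S.domain, (u : H) ≠ 0 ∧
        (∀ w : S.domain, ⟪S w, S u⟫ = ⟪(w : H), lam • S u⟫) ∧
        (∃ hm : (u : H) ∈ S_F.domain, S_F ⟨(u : H), hm⟩ = S_K v) ∧
        lam • (v : H) = S u) ∧
    (∀ u : S.domain, (u : H) ≠ 0 →
      (∀ w : S.domain, ⟪S w, S u⟫ = ⟪(w : H), lam • S u⟫) →
      ∃ v : S_K.domain, (v : H) ≠ 0 ∧ S_K v = lam • (v : H) ∧ lam • (v : H) = S u) := by
  have ofPencil : ∀ u : S.domain, (u : H) ≠ 0 → IsPencilEigenvector S lam u →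
      ∃ v : S_K.domain, (v : H) ≠ 0 ∧ S_K v = lam • (v : H) ∧ lam • (v : H) = S u :=
    fun u hu => exists_apply_eq_smul_of_isPencilEigenvector hdense hsym hKext hKadj hdomK hlam
      (LinearPMap.apply_ne_zero_of_coercive hε hbound hu)
  have toPencil : ∀ v : S_K.domain, (v : H) ≠ 0 → S_K v = lam • (v : H) →
      ∃ u : S.domain, (u : H) ≠ 0 ∧ IsPencilEigenvector S lam u ∧
        (∃ hm : (u : H) ∈ S_F.domain, S_F ⟨(u : H), hm⟩ = S_K v) ∧ lam • (v : H) = S u := by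
    intro v hv heig
    obtain ⟨u, hu, hpen, hKv, hSu⟩ :=
      exists_isPencilEigenvector_of_apply_eq_smul hdense hsym hKext hKadj hdomK hlam hv heig
    exact ⟨u, hu, hpen, ⟨hFext.1 u.2, (hFext.2 rfl).symm.trans hKv.symm⟩, hSu⟩
  refine ⟨⟨fun ⟨v, hv, heig⟩ => ?_, fun ⟨u, hu, hpen⟩ => ?_⟩, toPencil, ofPencil⟩
  · obtain ⟨u, hu, hpen, -⟩ := toPencil v hv heig
    exact ⟨u, hu, hpen⟩
  · obtain ⟨v, hv, heig, -⟩ := ofPencil u hu hpen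
    exact ⟨v, hv, heig⟩

/-- Lemma 3.1: For `S` densely defined, closed, symmetric with `S ≥ ε·I`,
`ε > 0`, and `λ ≠ 0`: there is `0 ≠ v ∈ dom S_K` with `S_K v = λ v` iff there is
`0 ≠ u ∈ dom (S*S)` with `S*S u = λ S u` (encoded as: `S u ∈ dom S*` and
`S*(S u) = λ • S u`, via `∀ w ∈ dom S, ⟪S w, S u⟫ = ⟪w, λ • S u⟫`); moreover the
solutions correspond via `u = (S_F)⁻¹ S_K v` (i.e. `S_F u = S_K v`) and `v = λ⁻¹ S u`
(i.e. `λ • v = S u`). -/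
theorem stmt_1 (S S_F S_K : H →ₗ.[ℂ] H)
    (hdense : Dense (S.domain : Set H))
    (hclosed : S.IsClosed)
    (hsym : ∀ u v : S.domain, ⟪S u, (v : H)⟫ = ⟪(u : H), S v⟫)
    (ε : ℝ) (hε : 0 < ε)
    (hbound : ∀ u : S.domain, ε * ‖(u : H)‖ ^ 2 ≤ (⟪(u : H), S u⟫).re)
    (hFext : S ≤ S_F) (hKext : S ≤ S_K)
    (hFadj : ∀ (v : S_F.domain) (u : S.domain), ⟪S u, (v : H)⟫ = ⟪(u : H), S_F v⟫)
    (hKadj : ∀ (v : S_K.domain) (u : S.domain), ⟪S u, (v : H)⟫ = ⟪(u : H), S_K v⟫)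
    (hFbound : ∀ v : S_F.domain, ε * ‖(v : H)‖ ^ 2 ≤ (⟪(v : H), S_F v⟫).re)
    (hdomK : S_K.domain = S.domain ⊔ adjKerD S)
    (lam : ℂ) (hlam : lam ≠ 0) :
    ((∃ v : S_K.domain, (v : H) ≠ 0 ∧ S_K v = lam • (v : H)) ↔
      (∃ u : S.domain, (u : H) ≠ 0 ∧
        ∀ w : S.domain, ⟪S w, S u⟫ = ⟪(w : H), lam • S u⟫)) ∧
    (∀ v : S_K.domain, (v : H) ≠ 0 → S_K v = lam • (v : H) →
      ∃ u : S.domain, (u : H) ≠ 0 ∧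
        (∀ w : S.domain, ⟪S w, S u⟫ = ⟪(w : H), lam • S u⟫) ∧
        (∃ hm : (u : H) ∈ S_F.domain, S_F ⟨(u : H), hm⟩ = S_K v) ∧
        lam • (v : H) = S u) ∧
    (∀ u : S.domain, (u : H) ≠ 0 →
      (∀ w : S.domain, ⟪S w, S u⟫ = ⟪(w : H), lam • S u⟫) →
      ∃ v : S_K.domain, (v : H) ≠ 0 ∧ S_K v = lam • (v : H) ∧ lam • (v : H) = S u) :=
  stmt_1_general S S_F S_K hdense hsym ε hε hbound hFext hKext hKadj hdomK lam hlam
end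
end

section
/- Let S be a densely defined, closed operator in H with S ≥ εI for ε > 0, viewed via the Hilbert space W = dom(S) equipped with inner product (u,v)_W = (Su, Sv)_H. The operator T on W defined by (w₁, T w₂)_W = (w₁, S w₂)_H is bounded, self-adjoint, nonnegative, and satisfies ‖T‖ ≤ ε⁻¹. -/
/-!
For `w ∈ W`, testing the defining identity of `T` against `T w` gives
`‖S T w‖² = Re ⟪T w, S w⟫ ≤ ‖T w‖ ‖S w‖`, and coercivity `ε ‖T w‖ ≤ ‖S T w‖` turns this into
`‖S T w‖ ≤ ε⁻¹ ‖S w‖`. Self-adjointness and nonnegativity of `T` in `W` are those of `S` in `H`,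
since `(w₁, T w₂)_W = ⟪w₁, S w₂⟫`.
-/

open scoped ComplexInnerProductSpace
open Filter

noncomputable section

variable {H : Type*} [NormedAddCommGroup H] [InnerProductSpace ℂ H] [CompleteSpace H]

theorem mul_le_of_mul_sq_le_mul {a b t : ℝ} (ht : 0 ≤ t) (hb : 0 ≤ b) (h : a * t ^ 2 ≤ t * b) :
    a * t ≤ b := by
  rcases ht.eq_or_lt with rfl | ht
  · simpa using hb
  · exact le_of_mul_le_mul_right (by linarith) ht

section Coercive

open scoped InnerProductSpace

variable {𝕜 E : Type*} [RCLike 𝕜] [NormedAddCommGroup E] [InnerProductSpace 𝕜 E]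

theorem mul_norm_le_norm_of_mul_norm_sq_le_re_inner {ε : ℝ} {x y : E}
    (h : ε * ‖x‖ ^ 2 ≤ RCLike.re ⟪x, y⟫_𝕜) : ε * ‖x‖ ≤ ‖y‖ :=
  mul_le_of_mul_sq_le_mul (norm_nonneg x) (norm_nonneg y) (h.trans (re_inner_le_norm x y))

variable (S : E →ₗ.[𝕜] E) (T : S.domain → S.domain)
  (hT : ∀ w₁ w₂ : S.domain, ⟪S w₁, S (T w₂)⟫_𝕜 = ⟪(w₁ : E), S w₂⟫_𝕜)
include hT

theorem LinearPMap.norm_apply_sq_le_of_inner_apply_eq (w : S.domain) :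
    ‖S (T w)‖ ^ 2 ≤ ‖(T w : E)‖ * ‖S w‖ := by
  rw [← inner_self_eq_norm_sq (𝕜 := 𝕜), hT]
  exact re_inner_le_norm _ _

theorem LinearPMap.norm_apply_le_inv_mul_of_inner_apply_eq {ε : ℝ} (hε : 0 < ε)
    (hbound : ∀ u : S.domain, ε * ‖(u : E)‖ ^ 2 ≤ RCLike.re ⟪(u : E), S u⟫_𝕜) (w : S.domain) :
    ‖S (T w)‖ ≤ ε⁻¹ * ‖S w‖ := by
  have hcoercive : ε * ‖(T w : E)‖ ≤ ‖S (T w)‖ :=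
    mul_norm_le_norm_of_mul_norm_sq_le_re_inner (hbound (T w))
  have hsq : ε * ‖S (T w)‖ ^ 2 ≤ ‖S (T w)‖ * ‖S w‖ :=
    calc ε * ‖S (T w)‖ ^ 2 ≤ ε * (‖(T w : E)‖ * ‖S w‖) :=
          mul_le_mul_of_nonneg_left (S.norm_apply_sq_le_of_inner_apply_eq T hT w) hε.le
      _ = ε * ‖(T w : E)‖ * ‖S w‖ := (mul_assoc _ _ _).symm
      _ ≤ ‖S (T w)‖ * ‖S w‖ := mul_le_mul_of_nonneg_right hcoercive (norm_nonneg _)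
  rw [le_inv_mul_iff₀ hε]
  exact mul_le_of_mul_sq_le_mul (norm_nonneg _) (norm_nonneg _) hsq

theorem LinearPMap.inner_apply_comm_of_inner_apply_eq
    (hsym : ∀ u v : S.domain, ⟪S u, (v : E)⟫_𝕜 = ⟪(u : E), S v⟫_𝕜) (w₁ w₂ : S.domain) :
    ⟪S (T w₁), S w₂⟫_𝕜 = ⟪S w₁, S (T w₂)⟫_𝕜 := by
  rw [← inner_conj_symm, hT, inner_conj_symm, hsym, hT]

theorem LinearPMap.im_inner_apply_eq_zero_of_inner_apply_eq
    (hsym : ∀ u v : S.domain, ⟪S u, (v : E)⟫_𝕜 = ⟪(u : E), S v⟫_𝕜) (w : S.domain) :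
    RCLike.im ⟪S w, S (T w)⟫_𝕜 = 0 := by
  rw [hT, ← RCLike.conj_eq_iff_im, inner_conj_symm]
  exact hsym w w

theorem LinearPMap.re_inner_apply_nonneg_of_inner_apply_eq {ε : ℝ} (hε : 0 ≤ ε)
    (hbound : ∀ u : S.domain, ε * ‖(u : E)‖ ^ 2 ≤ RCLike.re ⟪(u : E), S u⟫_𝕜) (w : S.domain) :
    0 ≤ RCLike.re ⟪S w, S (T w)⟫_𝕜 := by
  rw [hT]
  exact (mul_nonneg hε (sq_nonneg _)).trans (hbound w)

end Coercive

theorem stmt_2_general (S : H →ₗ.[ℂ] H)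
    (hsym : ∀ u v : S.domain, ⟪S u, (v : H)⟫ = ⟪(u : H), S v⟫)
    (ε : ℝ) (hε : 0 < ε)
    (hbound : ∀ u : S.domain, ε * ‖(u : H)‖ ^ 2 ≤ (⟪(u : H), S u⟫).re)
    (T : S.domain →ₗ[ℂ] S.domain)
    (hT : ∀ w₁ w₂ : S.domain, ⟪S w₁, S (T w₂)⟫ = ⟪(w₁ : H), S w₂⟫) :
    -- boundedness with norm bound `ε⁻¹` (in the `W`-norm `‖w‖_W = ‖S w‖`):
    (∀ w : S.domain, ‖S (T w)‖ ≤ ε⁻¹ * ‖S w‖) ∧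
    -- self-adjointness in `W`:
    (∀ w₁ w₂ : S.domain, ⟪S (T w₁), S w₂⟫ = ⟪S w₁, S (T w₂)⟫) ∧
    -- nonnegativity in `W`:
    (∀ w : S.domain, (⟪S w, S (T w)⟫).im = 0 ∧ 0 ≤ (⟪S w, S (T w)⟫).re) :=
  ⟨S.norm_apply_le_inv_mul_of_inner_apply_eq T hT hε hbound,
    S.inner_apply_comm_of_inner_apply_eq T hT hsym,
    fun w => ⟨S.im_inner_apply_eq_zero_of_inner_apply_eq T hT hsym w,
      S.re_inner_apply_nonneg_of_inner_apply_eq T hT hε.le hbound w⟩⟩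

/-- Let `S` be densely defined, closed, symmetric with `S ≥ ε·I`,
`ε > 0`. View `W := dom S` as a Hilbert space with inner product
`(u, v)_W = ⟪S u, S v⟫_H` (so `‖w‖_W = ‖S w‖_H`). If `T : W → W` is the linear map
determined by `(w₁, T w₂)_W = ⟪w₁, S w₂⟫_H`, then `T` is bounded with `‖T‖ ≤ ε⁻¹`,
self-adjoint, and nonnegative (all with respect to the `W`-inner product). -/
theorem stmt_2 (S : H →ₗ.[ℂ] H)
    (hdense : Dense (S.domain : Set H))
    (hclosed : S.IsClosed)
    (hsym : ∀ u v : S.domain, ⟪S u, (v : H)⟫ = ⟪(u : H), S v⟫)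
    (ε : ℝ) (hε : 0 < ε)
    (hbound : ∀ u : S.domain, ε * ‖(u : H)‖ ^ 2 ≤ (⟪(u : H), S u⟫).re)
    (T : S.domain →ₗ[ℂ] S.domain)
    (hT : ∀ w₁ w₂ : S.domain, ⟪S w₁, S (T w₂)⟫ = ⟪(w₁ : H), S w₂⟫) :
    -- boundedness with norm bound `ε⁻¹` (in the `W`-norm `‖w‖_W = ‖S w‖`):
    (∀ w : S.domain, ‖S (T w)‖ ≤ ε⁻¹ * ‖S w‖) ∧
    -- self-adjointness in `W`:
    (∀ w₁ w₂ : S.domain, ⟪S (T w₁), S w₂⟫ = ⟪S w₁, S (T w₂)⟫) ∧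
    -- nonnegativity in `W`:
    (∀ w : S.domain, (⟪S w, S (T w)⟫).im = 0 ∧ 0 ≤ (⟪S w, S (T w)⟫).re) :=
  stmt_2_general S hsym ε hε hbound T hT
end
end

section
/- Let S be densely defined, closed, symmetric with S ≥ εI, ε > 0. Then the inverse of the reduced Krein–von Neumann extension Ŝ_K (the restriction of S_K to [ker(S_K)]^⊥) satisfies (Ŝ_K)⁻¹ = U_S [|S|⁻¹ S |S|⁻¹] (U_S)*, where S = U_S|S| is the polar decomposition; in particular (Ŝ_K)⁻¹ is unitarily equivalent to the bounded self-adjoint operator |S|⁻¹ S |S|⁻¹ on H. -/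
open scoped ComplexInnerProductSpace
open Filter

noncomputable section

variable {H : Type*} [NormedAddCommGroup H] [InnerProductSpace ℂ H] [CompleteSpace H]

/-!
`|S|⁻¹` is symmetric, being a bounded right inverse of the symmetric `|S|`, and
`S |S|⁻¹ = U_S` by the polar decomposition. Hence for `y ∈ H` the vector
`U_S B y = U_S |S|⁻¹ U_S y` differs from `|S|⁻¹ y ∈ dom S` by an element of `ker S*`: pairing with
`S u = U_S |S| u` gives `⟪u, U_S y⟫` for both. Since `dom S_K = dom S ∔ ker S*` and `S_K`
vanishes on `ker S*`, we get `S_K (U_S B y) = S |S|⁻¹ y = U_S y`.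
-/

section

variable {𝕜 E : Type*} [RCLike 𝕜] [NormedAddCommGroup E] [InnerProductSpace 𝕜 E]

open scoped InnerProductSpace

theorem LinearPMap.isSymmetric_of_rightInverse {M : E →ₗ.[𝕜] E}
    (hM : ∀ u v : M.domain, ⟪M u, (v : E)⟫_𝕜 = ⟪(u : E), M v⟫_𝕜) (R : E →ₗ[𝕜] E)
    (hRdom : ∀ x, R x ∈ M.domain) (hR : ∀ x, M ⟨R x, hRdom x⟩ = x) : R.IsSymmetric := by
  intro z w
  calc ⟪R z, w⟫_𝕜 = ⟪R z, M ⟨R w, hRdom w⟩⟫_𝕜 := by rw [hR]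
    _ = ⟪M ⟨R z, hRdom z⟩, R w⟫_𝕜 := (hM ⟨R z, hRdom z⟩ ⟨R w, hRdom w⟩).symm
    _ = ⟪z, R w⟫_𝕜 := by rw [hR]

theorem LinearPMap.apply_eq_zero_of_inner_range_eq_zero {S T : E →ₗ.[𝕜] E}
    (hdense : Dense (S.domain : Set E))
    (hT : ∀ (v : T.domain) (u : S.domain), ⟪S u, (v : E)⟫_𝕜 = ⟪(u : E), T v⟫_𝕜)
    (v : T.domain) (hv : ∀ u : S.domain, ⟪S u, (v : E)⟫_𝕜 = 0) : T v = 0 := by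
  refine hdense.eq_zero_of_inner_left 𝕜 fun u hu => ?_
  rw [← inner_conj_symm, ← hT v ⟨u, hu⟩, hv, RingHom.map_zero]

theorem LinearPMap.apply_eq_of_inner_range_sub_eq_zero {S T : E →ₗ.[𝕜] E} (hST : S ≤ T)
    (hdense : Dense (S.domain : Set E))
    (hT : ∀ (v : T.domain) (u : S.domain), ⟪S u, (v : E)⟫_𝕜 = ⟪(u : E), T v⟫_𝕜)
    (v : T.domain) (x : S.domain) (hvx : ∀ u : S.domain, ⟪S u, (v : E) - x⟫_𝕜 = 0) :
    T v = S x := by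
  set x' : T.domain := ⟨x, hST.1 x.2⟩
  have hTx : T x' = S x := (hST.2 rfl).symm
  have hzero : T (v - x') = 0 := apply_eq_zero_of_inner_range_eq_zero hdense hT _ hvx
  rwa [T.map_sub, hTx, sub_eq_zero] at hzero

theorem inner_range_polar_sub_eq_zero {S M : E →ₗ.[𝕜] E} {U R : E →L[𝕜] E}
    (hsym : ∀ u v : S.domain, ⟪S u, (v : E)⟫_𝕜 = ⟪(u : E), S v⟫_𝕜)
    (hU : ∀ x, ‖U x‖ = ‖x‖) (hR : (R : E →ₗ[𝕜] E).IsSymmetric)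
    (hpolar : ∀ (u : S.domain) (hu : (u : E) ∈ M.domain), S u = U (M ⟨(u : E), hu⟩))
    (hRM : ∀ u : M.domain, R (M u) = (u : E)) (hdom : ∀ u : S.domain, (u : E) ∈ M.domain)
    (hRdom : ∀ x, R x ∈ S.domain) (hSR : ∀ y, S ⟨R y, hRdom y⟩ = U y) (y : E) (u : S.domain) :
    ⟪S u, U (R (U y)) - R y⟫_𝕜 = 0 := by
  have hUR : ⟪S u, U (R (U y))⟫_𝕜 = ⟪(u : E), U y⟫_𝕜 := by
    have hUinner : ∀ a b, ⟪U a, U b⟫_𝕜 = ⟪a, b⟫_𝕜 :=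
      LinearIsometry.inner_map_map ⟨(U : E →ₗ[𝕜] E), hU⟩
    rw [hpolar u (hdom u), hUinner, ← hR.apply_clm, hRM]
  have hRy : ⟪S u, R y⟫_𝕜 = ⟪(u : E), U y⟫_𝕜 := by
    rw [← hSR]; exact hsym u ⟨R y, hRdom y⟩
  rw [inner_sub_right, hUR, hRy, sub_self]

end

theorem stmt_4_general (S S_K M : H →ₗ.[ℂ] H)
    (hdense : Dense (S.domain : Set H))
    (hsym : ∀ u v : S.domain, ⟪S u, (v : H)⟫ = ⟪(u : H), S v⟫)
    -- `M = |S|`: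
    (hMdom : M.domain = S.domain)
    (hMsym : ∀ u v : M.domain, ⟪M u, (v : H)⟫ = ⟪(u : H), M v⟫)
    -- `U = U_S`, the unitary of the polar decomposition, mapping `H` onto `Ĥ = (ker S*)ᗮ`:
    (U : H →L[ℂ] H)
    (hUiso : ∀ x : H, ‖U x‖ = ‖x‖)
    (hpolar : ∀ (u : S.domain) (hu : (u : H) ∈ M.domain), S u = U (M ⟨(u : H), hu⟩))
    -- `Minv = |S|⁻¹ ∈ B(H)`:
    (Minv : H →L[ℂ] H)
    (hMinvmem : ∀ x : H, Minv x ∈ S.domain)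
    (hMinv1 : ∀ (x : H) (h : Minv x ∈ M.domain), M ⟨Minv x, h⟩ = x)
    (hMinv2 : ∀ u : M.domain, Minv (M u) = (u : H))
    -- `S_K`, the Krein–von Neumann extension of `S`:
    (hKext : S ≤ S_K)
    (hKadj : ∀ (v : S_K.domain) (u : S.domain), ⟪S u, (v : H)⟫ = ⟪(u : H), S_K v⟫)
    (hdomK : S_K.domain = S.domain ⊔ adjKerD S) :
    -- `(Ŝ_K)⁻¹ = U_S [|S|⁻¹ S |S|⁻¹] (U_S)*`, i.e. `Ŝ_K ∘ U_S ∘ B = U_S` on `H`: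
    (∀ y : H, ∃ h2 : U (Minv (S ⟨Minv y, hMinvmem y⟩)) ∈ S_K.domain,
        S_K ⟨U (Minv (S ⟨Minv y, hMinvmem y⟩)), h2⟩ = U y) ∧
    -- `B = |S|⁻¹ S |S|⁻¹` is self-adjoint on `H`:
    (∀ x y : H, ⟪Minv (S ⟨Minv x, hMinvmem x⟩), y⟫ = ⟪x, Minv (S ⟨Minv y, hMinvmem y⟩)⟫) := by
  have hMinvM : ∀ x, Minv x ∈ M.domain := fun x => hMdom ▸ hMinvmem x
  have hMinvsym : (Minv : H →ₗ[ℂ] H).IsSymmetric :=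
    LinearPMap.isSymmetric_of_rightInverse hMsym _ hMinvM fun x => hMinv1 x (hMinvM x)
  have hSMinv : ∀ y, S ⟨Minv y, hMinvmem y⟩ = U y := fun y => by
    rw [hpolar _ (hMinvM y), hMinv1]
  refine ⟨fun y => ?_, fun x y => ?_⟩
  · have hcorr := inner_range_polar_sub_eq_zero hsym hUiso hMinvsym hpolar hMinv2
      (fun u => hMdom.symm ▸ u.2) hMinvmem hSMinv y
    rw [← hSMinv y] at hcorr
    have hmem : U (Minv (S ⟨Minv y, hMinvmem y⟩)) ∈ S_K.domain := by
      rw [hdomK, ← add_sub_cancel (Minv y) (U _)]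
      exact Submodule.add_mem_sup (hMinvmem y) hcorr
    refine ⟨hmem, ?_⟩
    rw [LinearPMap.apply_eq_of_inner_range_sub_eq_zero hKext hdense hKadj ⟨_, hmem⟩
      ⟨Minv y, hMinvmem y⟩ hcorr, hSMinv]
  · calc ⟪Minv (S ⟨Minv x, hMinvmem x⟩), y⟫
        = ⟪S ⟨Minv x, hMinvmem x⟩, Minv y⟫ := hMinvsym.apply_clm _ _
      _ = ⟪(Minv x : H), S ⟨Minv y, hMinvmem y⟩⟫ := hsym _ ⟨Minv y, hMinvmem y⟩
      _ = ⟪x, Minv (S ⟨Minv y, hMinvmem y⟩)⟫ := by rw [← hMinvsym.apply_clm]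

/-- Theorem 3.4, (3.29): Let `S` be densely defined, closed, symmetric,
`S ≥ ε·I`, `ε > 0`, with polar decomposition `S = U_S |S|`, where `M = |S| = (S*S)^{1/2}`
(characterized as the self-adjoint operator with `dom M = dom S`, `M ≥ ε·I`, and
`⟪M u, M v⟫ = ⟪S u, S v⟫`), `Minv = |S|⁻¹ ∈ B(H)` its bounded inverse, and
`U = U_S ∈ B(H)` the isometry of the polar decomposition mapping `H` onto
`Ĥ = (ker S*)ᗮ`. Let `S_K` be the Krein–von Neumann extension of `S`. Then the inverse
of the reduced Krein–von Neumann operator `Ŝ_K = S_K|_{(ker S_K)ᗮ}` satisfies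
`(Ŝ_K)⁻¹ = U_S (|S|⁻¹ S |S|⁻¹) (U_S)*`; pointwise, with `B y := |S|⁻¹ S |S|⁻¹ y`, this
says `S_K (U_S (B y)) = U_S y` for all `y ∈ H`; in particular `(Ŝ_K)⁻¹` is unitarily
equivalent to the operator `B = |S|⁻¹ S |S|⁻¹ ∈ B(H)`, which is self-adjoint on `H`. -/
theorem stmt_4 (S S_K M : H →ₗ.[ℂ] H)
    (hdense : Dense (S.domain : Set H))
    (hclosed : S.IsClosed)
    (hsym : ∀ u v : S.domain, ⟪S u, (v : H)⟫ = ⟪(u : H), S v⟫)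
    (ε : ℝ) (hε : 0 < ε)
    (hbound : ∀ u : S.domain, ε * ‖(u : H)‖ ^ 2 ≤ (⟪(u : H), S u⟫).re)
    -- `M = |S|`:
    (hMdom : M.domain = S.domain)
    (hMsym : ∀ u v : M.domain, ⟪M u, (v : H)⟫ = ⟪(u : H), M v⟫)
    (hMbound : ∀ u : M.domain, ε * ‖(u : H)‖ ^ 2 ≤ (⟪(u : H), M u⟫).re)
    (hMsq : ∀ (u v : S.domain) (hu : (u : H) ∈ M.domain) (hv : (v : H) ∈ M.domain),
      ⟪M ⟨(u : H), hu⟩, M ⟨(v : H), hv⟩⟫ = ⟪S u, S v⟫)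
    -- `U = U_S`, the unitary of the polar decomposition, mapping `H` onto `Ĥ = (ker S*)ᗮ`:
    (U : H →L[ℂ] H)
    (hUiso : ∀ x : H, ‖U x‖ = ‖x‖)
    (hUrange : Set.range (⇑U) = ((adjKerD S)ᗮ : Set H))
    (hpolar : ∀ (u : S.domain) (hu : (u : H) ∈ M.domain), S u = U (M ⟨(u : H), hu⟩))
    -- `Minv = |S|⁻¹ ∈ B(H)`:
    (Minv : H →L[ℂ] H)
    (hMinvmem : ∀ x : H, Minv x ∈ S.domain)
    (hMinv1 : ∀ (x : H) (h : Minv x ∈ M.domain), M ⟨Minv x, h⟩ = x)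
    (hMinv2 : ∀ u : M.domain, Minv (M u) = (u : H))
    -- `S_K`, the Krein–von Neumann extension of `S`:
    (hKext : S ≤ S_K)
    (hKadj : ∀ (v : S_K.domain) (u : S.domain), ⟪S u, (v : H)⟫ = ⟪(u : H), S_K v⟫)
    (hdomK : S_K.domain = S.domain ⊔ adjKerD S) :
    -- `(Ŝ_K)⁻¹ = U_S [|S|⁻¹ S |S|⁻¹] (U_S)*`, i.e. `Ŝ_K ∘ U_S ∘ B = U_S` on `H`:
    (∀ y : H, ∃ h2 : U (Minv (S ⟨Minv y, hMinvmem y⟩)) ∈ S_K.domain,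
        S_K ⟨U (Minv (S ⟨Minv y, hMinvmem y⟩)), h2⟩ = U y) ∧
    -- `B = |S|⁻¹ S |S|⁻¹` is self-adjoint on `H`:
    (∀ x y : H, ⟪Minv (S ⟨Minv x, hMinvmem x⟩), y⟫ = ⟪x, Minv (S ⟨Minv y, hMinvmem y⟩)⟫) :=
  stmt_4_general S S_K M hdense hsym hMdom hMsym U hUiso hpolar Minv hMinvmem hMinv1 hMinv2 hKext
    hKadj hdomK
end
end

section
/- For the Krein–von Neumann extension h of the radial operator −d²/dr² + ((4κ + (n−1)(n−3))/4) r⁻² on (0,R) (with κ = ℓ(ℓ+n−2), ℓ ∈ ℕ, n ≥ 2), the boundary condition at r = R is f'(R) − (ℓ + (n−1)/2) R⁻¹ f(R) = 0; equivalently, the unique L²-solution of hψ = 0 is ψ(r) = r^{ℓ + (n−1)/2}, and for u in dom(h) written as u = f + c·ψ with f in the minimal domain (f(R) = f'(R) = 0), one has u'(R)/u(R) = (ℓ + (n−1)/2)/R whenever u(R) ≠ 0. -/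
/-!
With `α = ℓ + (n - 1)/2` the potential coefficient `(4κ + (n-1)(n-3))/4` equals `α(α - 1)`, so
`r ↦ r^α` solves the Euler equation `-ψ'' + α(α-1) r⁻² ψ = 0`; since `α ≥ 0` it is bounded on
`(0, R)`, hence square integrable. If `f` vanishes to first order at `R`, then `u = f + c ψ` has
the same value and derivative at `R` as `c ψ`, so `u'(R)/u(R) = ψ'(R)/ψ(R) = α/R`.
-/

open MeasureTheory Set

lemma hasDerivAt_const_mul_rpow_sub_one (α : ℝ) {r : ℝ} (hr : r ≠ 0) :
    HasDerivAt (fun s : ℝ => α * s ^ (α - 1)) (α * ((α - 1) * r ^ (α - 2))) r := by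
  have h := (Real.hasDerivAt_rpow_const (p := α - 1) (Or.inl hr)).const_mul α
  rwa [show α - 1 - 1 = α - 2 by ring] at h

lemma rpow_euler_eq (α : ℝ) {r : ℝ} (hr : 0 < r) :
    -(α * ((α - 1) * r ^ (α - 2))) + α * (α - 1) / r ^ 2 * r ^ α = 0 := by
  have hsplit : r ^ α = r ^ (α - 2) * r ^ 2 := by
    rw [← Real.rpow_two, ← Real.rpow_add hr, sub_add_cancel]
  rw [hsplit]
  field_simp
  ring

lemma radial_potential_coeff_eq (ℓ n : ℝ) :
    (4 * (ℓ * (ℓ + n - 2)) + (n - 1) * (n - 3)) / 4 =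
      (ℓ + (n - 1) / 2) * (ℓ + (n - 1) / 2 - 1) := by
  ring

lemma memLp_rpow_restrict_Ioo {α : ℝ} (hα : 0 ≤ α) (p : ENNReal) (R : ℝ) :
    MemLp (fun s : ℝ => s ^ α) p (volume.restrict (Ioo 0 R)) := by
  refine MemLp.of_bound (Real.continuous_rpow_const hα).aestronglyMeasurable (R ^ α) ?_
  refine (ae_restrict_iff' measurableSet_Ioo).2 (Filter.Eventually.of_forall fun x hx => ?_)
  rw [Real.norm_eq_abs, abs_of_nonneg (Real.rpow_nonneg hx.1.le α)]
  exact Real.rpow_le_rpow hx.1.le hx.2.le hα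

lemma deriv_div_eq_of_add_const_mul {f ψ u : ℝ → ℝ} {c ψ' R : ℝ}
    (hu : ∀ r, u r = f r + c * ψ r) (hfR : f R = 0) (hf' : HasDerivAt f 0 R)
    (hψ : HasDerivAt ψ ψ' R) (huR : u R ≠ 0) :
    deriv u R / u R = ψ' / ψ R := by
  have huR_eq : u R = c * ψ R := by rw [hu, hfR, zero_add]
  have hu' : HasDerivAt u (c * ψ') R := by
    rw [funext hu, ← zero_add (c * ψ')]
    exact hf'.add (hψ.const_mul c)
  have hc : c ≠ 0 := by rintro rfl; simp [huR_eq] at huR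
  rw [hu'.deriv, huR_eq, mul_div_mul_left _ _ hc]

lemma rpow_logDeriv_eq (α : ℝ) {R : ℝ} (hR : 0 < R) : α * R ^ (α - 1) / R ^ α = α / R := by
  have := (Real.rpow_pos_of_pos hR α).ne'
  rw [Real.rpow_sub_one hR.ne']
  field_simp

theorem stmt_14_general (n ℓ : ℕ) (hn : 2 ≤ n) (R : ℝ) (hR : 0 < R) :
    -- `ψ(r) = r^α` solves the homogeneous equation on `(0,R)` …
    (∀ r ∈ Set.Ioo (0 : ℝ) R,
      HasDerivAt (fun s : ℝ => s ^ ((ℓ : ℝ) + ((n : ℝ) - 1) / 2))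
        (((ℓ : ℝ) + ((n : ℝ) - 1) / 2) * r ^ ((ℓ : ℝ) + ((n : ℝ) - 1) / 2 - 1)) r ∧
      HasDerivAt
        (fun s : ℝ => ((ℓ : ℝ) + ((n : ℝ) - 1) / 2) * s ^ ((ℓ : ℝ) + ((n : ℝ) - 1) / 2 - 1))
        (((ℓ : ℝ) + ((n : ℝ) - 1) / 2) * (((ℓ : ℝ) + ((n : ℝ) - 1) / 2 - 1) *
          r ^ ((ℓ : ℝ) + ((n : ℝ) - 1) / 2 - 2))) r ∧
      -(((ℓ : ℝ) + ((n : ℝ) - 1) / 2) * (((ℓ : ℝ) + ((n : ℝ) - 1) / 2 - 1) *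
          r ^ ((ℓ : ℝ) + ((n : ℝ) - 1) / 2 - 2))) +
        ((4 * ((ℓ : ℝ) * ((ℓ : ℝ) + (n : ℝ) - 2)) + ((n : ℝ) - 1) * ((n : ℝ) - 3)) / 4) /
          r ^ 2 * r ^ ((ℓ : ℝ) + ((n : ℝ) - 1) / 2) = 0) ∧
    -- … and is in `L²((0,R); dr)`:
    MeasureTheory.MemLp (fun s : ℝ => s ^ ((ℓ : ℝ) + ((n : ℝ) - 1) / 2)) 2
      (MeasureTheory.volume.restrict (Set.Ioo (0 : ℝ) R)) ∧
    -- boundary condition at `r = R` for `u = f + c·ψ` with `f(R) = f'(R) = 0`: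
    (∀ (f u : ℝ → ℝ) (c : ℝ),
      (∀ r : ℝ, u r = f r + c * r ^ ((ℓ : ℝ) + ((n : ℝ) - 1) / 2)) →
      f R = 0 → HasDerivAt f 0 R → u R ≠ 0 →
      deriv u R / u R = ((ℓ : ℝ) + ((n : ℝ) - 1) / 2) / R) := by
  have hα_nonneg : 0 ≤ (ℓ : ℝ) + ((n : ℝ) - 1) / 2 := by
    have : (2 : ℝ) ≤ n := by exact_mod_cast hn
    have : (0 : ℝ) ≤ ℓ := ℓ.cast_nonneg
    linarith
  set α : ℝ := (ℓ : ℝ) + ((n : ℝ) - 1) / 2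
  refine ⟨fun r hr => ⟨Real.hasDerivAt_rpow_const (Or.inl hr.1.ne'),
    hasDerivAt_const_mul_rpow_sub_one α hr.1.ne', ?_⟩, memLp_rpow_restrict_Ioo hα_nonneg 2 R,
    fun f u c hu hfR hf' huR => ?_⟩
  · rw [radial_potential_coeff_eq]
    exact rpow_euler_eq α hr.1
  · rw [deriv_div_eq_of_add_const_mul hu hfR hf' (Real.hasDerivAt_rpow_const (Or.inl hR.ne')) huR]
    exact rpow_logDeriv_eq α hR

/-- For the Krein–von Neumann extension of the radial operator
`−d²/dr² + ((4κ + (n−1)(n−3))/4) r⁻²` on `(0, R)` (with `κ = ℓ(ℓ+n−2)`, `ℓ ≥ 1`,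
`n ≥ 2`), the kernel of the adjoint is spanned by `ψ(r) = r^{ℓ + (n−1)/2}` (the unique
`L²`-admissible solution): with `α := ℓ + (n−1)/2`, the function `r ↦ r^α` solves
`−ψ'' + ((4κ + (n−1)(n−3))/4) r⁻² ψ = 0` on `(0,R)` and lies in `L²((0,R))`; and for any
`u = f + c·ψ` in the Krein domain, with `f` in the minimal domain
(`f(R) = f'(R) = 0`), one has the boundary condition
`u'(R)/u(R) = (ℓ + (n−1)/2)/R` whenever `u(R) ≠ 0` — equivalently
`f'(R) − (ℓ + (n−1)/2) R⁻¹ f(R) = 0`. -/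
theorem stmt_14 (n ℓ : ℕ) (hn : 2 ≤ n) (hℓ : 1 ≤ ℓ) (R : ℝ) (hR : 0 < R) :
    -- `ψ(r) = r^α` solves the homogeneous equation on `(0,R)` …
    (∀ r ∈ Set.Ioo (0 : ℝ) R,
      HasDerivAt (fun s : ℝ => s ^ ((ℓ : ℝ) + ((n : ℝ) - 1) / 2))
        (((ℓ : ℝ) + ((n : ℝ) - 1) / 2) * r ^ ((ℓ : ℝ) + ((n : ℝ) - 1) / 2 - 1)) r ∧
      HasDerivAt
        (fun s : ℝ => ((ℓ : ℝ) + ((n : ℝ) - 1) / 2) * s ^ ((ℓ : ℝ) + ((n : ℝ) - 1) / 2 - 1))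
        (((ℓ : ℝ) + ((n : ℝ) - 1) / 2) * (((ℓ : ℝ) + ((n : ℝ) - 1) / 2 - 1) *
          r ^ ((ℓ : ℝ) + ((n : ℝ) - 1) / 2 - 2))) r ∧
      -(((ℓ : ℝ) + ((n : ℝ) - 1) / 2) * (((ℓ : ℝ) + ((n : ℝ) - 1) / 2 - 1) *
          r ^ ((ℓ : ℝ) + ((n : ℝ) - 1) / 2 - 2))) +
        ((4 * ((ℓ : ℝ) * ((ℓ : ℝ) + (n : ℝ) - 2)) + ((n : ℝ) - 1) * ((n : ℝ) - 3)) / 4) /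
          r ^ 2 * r ^ ((ℓ : ℝ) + ((n : ℝ) - 1) / 2) = 0) ∧
    -- … and is in `L²((0,R); dr)`:
    MeasureTheory.MemLp (fun s : ℝ => s ^ ((ℓ : ℝ) + ((n : ℝ) - 1) / 2)) 2
      (MeasureTheory.volume.restrict (Set.Ioo (0 : ℝ) R)) ∧
    -- boundary condition at `r = R` for `u = f + c·ψ` with `f(R) = f'(R) = 0`:
    (∀ (f u : ℝ → ℝ) (c : ℝ),
      (∀ r : ℝ, u r = f r + c * r ^ ((ℓ : ℝ) + ((n : ℝ) - 1) / 2)) →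
      f R = 0 → HasDerivAt f 0 R → u R ≠ 0 →
      deriv u R / u R = ((ℓ : ℝ) + ((n : ℝ) - 1) / 2) / R) :=
  stmt_14_general n ℓ hn R hR
end

section
/- Let N_D and N_K denote the eigenvalue counting functions of the Dirichlet and Krein Laplacians on balls B_n(0;R) ⊂ ℝⁿ. Then for all λ ∈ ℝ and n ≥ 3: N_K^{(n-1)}(λ) ≤ N_D^{(n)}(λ) − N_K^{(n)}(λ) ≤ N_D^{(n-1)}(λ), where superscript (m) refers to the ball B_m(0;R) ⊂ ℝ^m. This follows from the dimension recursion d_{n,ℓ} = d_{n−1,ℓ} + d_{n,ℓ−1} for the multiplicities of spherical harmonics and the representations N_D^{(n)}(λ) = ∑_{ℓ≥0} d_{n,ℓ} 𝒩_{(n/2)−1+ℓ}(λ), N_K^{(n)}(λ) = ∑_{ℓ≥0} d_{n,ℓ} 𝒩_{(n/2)+ℓ}(λ), together with the monotonicity of Bessel zeros j_{ν,k} in ν. -/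
/-!
Expanding each counting function in Bessel-zero counts, the recursion
`d_{n,ℓ} = d_{n-1,ℓ} + d_{n,ℓ-1}` telescopes `N_D^{(n)} - N_K^{(n)}` into
`∑_ℓ d_{n-1,ℓ} 𝒩_{n/2-1+ℓ}`. Bessel zeros increase with the order, so `𝒩_ν` decreases in `ν`;
comparing orders termwise with `(n-1)/2 - 1 + ℓ ≤ n/2 - 1 + ℓ ≤ (n-1)/2 + ℓ` gives both bounds.
-/

open Filter

section CountingZeros

variable {R : ℝ}

lemma finite_setOf_sq_div_le {a : ℕ → ℝ} (hR : R ≠ 0) (ha : Tendsto a atTop atTop) (lam : ℝ) :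
    {k : ℕ | 1 ≤ k ∧ a k ^ 2 / R ^ 2 ≤ lam}.Finite := by
  have hlarge : ∀ᶠ k in cofinite, lam < a k ^ 2 / R ^ 2 := by
    rw [Nat.cofinite_eq_atTop]
    exact ((tendsto_pow_atTop two_ne_zero).comp ha).atTop_div_const (by positivity)
      |>.eventually_gt_atTop lam
  exact hlarge.subset fun k hk => not_lt.mpr hk.2

lemma natCard_setOf_sq_div_le_anti {a b : ℕ → ℝ} (hR : R ≠ 0) (ha : Tendsto a atTop atTop)
    (hpos : ∀ k, 1 ≤ k → 0 < a k) (hab : ∀ k, a k ≤ b k) (lam : ℝ) :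
    Nat.card {k : ℕ | 1 ≤ k ∧ b k ^ 2 / R ^ 2 ≤ lam} ≤
      Nat.card {k : ℕ | 1 ≤ k ∧ a k ^ 2 / R ^ 2 ≤ lam} := by
  refine Nat.card_mono (finite_setOf_sq_div_le hR ha lam) fun k ⟨hk, hbk⟩ => ⟨hk, ?_⟩
  have hsq : a k ^ 2 ≤ b k ^ 2 := pow_le_pow_left₀ (hpos k hk).le (hab k) 2
  exact (div_le_div_of_nonneg_right hsq (sq_nonneg R)).trans hbk

end CountingZeros

lemma hasSum_sub_of_recursion {d d' c : ℕ → ℝ} {a b : ℝ} (h0 : d 0 = d' 0)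
    (hrec : ∀ ℓ, d (ℓ + 1) = d' (ℓ + 1) + d ℓ)
    (hf : HasSum (fun ℓ => d ℓ * c ℓ) a) (hh : HasSum (fun ℓ => d ℓ * c (ℓ + 1)) b) :
    HasSum (fun ℓ => d' ℓ * c ℓ) (a - b) := by
  rw [← hasSum_nat_add_iff' 1] at hf ⊢
  convert hf.sub hh using 1
  · ext ℓ
    rw [hrec]
    ring
  · simp only [Finset.range_one, Finset.sum_singleton, h0]
    ring

/-- from the proof of Proposition 11.1: Let `R > 0`, `n ≥ 3`. Let
`j ν k` denote the `k`-th positive zero of the Bessel function `J_ν` (positive, tending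
to `∞` in `k`, and monotone nondecreasing in `ν ≥ 0`), and for `ν ≥ 0` let
`𝒩_ν(λ) = #{k ≥ 1 | j_{ν,k}² R⁻² ≤ λ}`. Let `d m ℓ` be the dimension of the space of
spherical harmonics of degree `ℓ` on `S^{m−1}`, satisfying the recursion
`d_{m,ℓ} = d_{m−1,ℓ} + d_{m,ℓ−1}` (with `d_{m,−1} = 0`). Let `N_D^{(m)}` and `N_K^{(m)}`
be the eigenvalue counting functions of the Dirichlet and Krein Laplacians on the ball
`B_m(0;R) ⊂ ℝᵐ`, given by the representations
`N_D^{(m)}(λ) = ∑_{ℓ≥0} d_{m,ℓ} 𝒩_{(m/2)−1+ℓ}(λ)` and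
`N_K^{(m)}(λ) = ∑_{ℓ≥0} d_{m,ℓ} 𝒩_{(m/2)+ℓ}(λ)` (all four relevant series summable).
Then for all `λ ∈ ℝ`:
`N_K^{(n−1)}(λ) ≤ N_D^{(n)}(λ) − N_K^{(n)}(λ) ≤ N_D^{(n−1)}(λ)`. -/
theorem stmt_19 (R : ℝ) (hR : 0 < R) (n : ℕ) (hn : 3 ≤ n)
    (j : ℝ → ℕ → ℝ)
    (hjpos : ∀ (ν : ℝ) (k : ℕ), 0 ≤ ν → 1 ≤ k → 0 < j ν k)
    (hjtop : ∀ ν : ℝ, 0 ≤ ν → Tendsto (j ν) atTop atTop)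
    -- monotonicity of the Bessel zeros `j_{ν,k}` in the order `ν ≥ 0`:
    (hjmono : ∀ (k : ℕ) (ν ν' : ℝ), 0 ≤ ν → ν ≤ ν' → j ν k ≤ j ν' k)
    (NN : ℝ → ℝ → ℕ)
    (hNN : ∀ (ν lam : ℝ), 0 ≤ ν →
      (NN ν lam : ℕ) = Nat.card {k : ℕ | 1 ≤ k ∧ (j ν k) ^ 2 / R ^ 2 ≤ lam})
    (d : ℕ → ℕ → ℕ)
    -- recursion `d_{m,ℓ} = d_{m−1,ℓ} + d_{m,ℓ−1}`, `d_{m,−1} = 0`: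
    (hd0 : ∀ m : ℕ, 3 ≤ m → d m 0 = d (m - 1) 0)
    (hdrec : ∀ (m : ℕ), 3 ≤ m → ∀ ℓ : ℕ, d m (ℓ + 1) = d (m - 1) (ℓ + 1) + d m ℓ)
    (N_D N_K : ℕ → ℝ → ℝ)
    (hsumD : ∀ (m : ℕ) (lam : ℝ), 2 ≤ m →
      Summable (fun ℓ : ℕ => (d m ℓ : ℝ) * (NN ((m : ℝ) / 2 - 1 + ℓ) lam : ℝ)))
    (hsumK : ∀ (m : ℕ) (lam : ℝ), 2 ≤ m →
      Summable (fun ℓ : ℕ => (d m ℓ : ℝ) * (NN ((m : ℝ) / 2 + ℓ) lam : ℝ)))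
    (hND : ∀ (m : ℕ) (lam : ℝ), 2 ≤ m →
      N_D m lam = ∑' ℓ : ℕ, (d m ℓ : ℝ) * (NN ((m : ℝ) / 2 - 1 + ℓ) lam : ℝ))
    (hNK : ∀ (m : ℕ) (lam : ℝ), 2 ≤ m →
      N_K m lam = ∑' ℓ : ℕ, (d m ℓ : ℝ) * (NN ((m : ℝ) / 2 + ℓ) lam : ℝ)) :
    ∀ lam : ℝ,
      N_K (n - 1) lam ≤ N_D n lam - N_K n lam ∧
        N_D n lam - N_K n lam ≤ N_D (n - 1) lam := by
  intro lam
  have hNN_anti (ν ν' : ℝ) (hν : 0 ≤ ν) (hle : ν ≤ ν') : NN ν' lam ≤ NN ν lam := by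
    rw [hNN ν lam hν, hNN ν' lam (hν.trans hle)]
    exact natCard_setOf_sq_div_le_anti hR.ne' (hjtop ν hν) (hjpos ν · hν)
      (hjmono · ν ν' hν hle) lam
  have hn2 : 2 ≤ n := by omega
  have hn1 : 2 ≤ n - 1 := by omega
  have hn3 : (3 : ℝ) ≤ n := by exact_mod_cast hn
  have hcast : ((n - 1 : ℕ) : ℝ) = n - 1 := by push_cast [show 1 ≤ n by omega]; ring
  have hmid : HasSum (fun ℓ : ℕ => (d (n - 1) ℓ : ℝ) * NN ((n : ℝ) / 2 - 1 + ℓ) lam)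
      (N_D n lam - N_K n lam) := by
    rw [hND n lam hn2, hNK n lam hn2]
    refine hasSum_sub_of_recursion (by exact_mod_cast hd0 n hn)
      (fun ℓ => by exact_mod_cast hdrec n hn ℓ) (hsumD n lam hn2).hasSum ?_
    convert (hsumK n lam hn2).hasSum using 5
    push_cast
    ring
  constructor
  · rw [hNK (n - 1) lam hn1]
    refine hasSum_le (fun ℓ => ?_) (hsumK (n - 1) lam hn1).hasSum hmid
    gcongr
    refine hNN_anti _ _ ?_ ?_ <;> push_cast [hcast] <;> linarith [ℓ.cast_nonneg (α := ℝ)]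
  · rw [hND (n - 1) lam hn1]
    refine hasSum_le (fun ℓ => ?_) hmid (hsumD (n - 1) lam hn1).hasSum
    gcongr
    refine hNN_anti _ _ ?_ ?_ <;> push_cast [hcast] <;> linarith [ℓ.cast_nonneg (α := ℝ)]
end
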